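/- The dual of the completely bounded norm of a t-tensor R equals its Minkowski gauge with respect to K(n,t): ‖R‖_{cb,*} = inf { w > 0 : R ∈ w·K(n,t) }. Equivalently, K(n,t) is the unit ball of the dual norm of ‖·‖_cb on the space of t-tensors. -/

import Mathlib

noncomputable section

/-- `d × d` real matrices, viewed as operators on Euclidean space (with operator norm). -/
abbrev Mat (d : ℕ) := EuclideanSpace ℝ (Fin d) →L[ℝ] EuclideanSpace ℝ (Fin d)

/-- The set `K(n,t)` of `t`-tensors of the form `(⟨u, A(i₁)⋯A(i_t) v⟩)_{i ∈ [n]^t}` with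
`u, v` unit vectors and `A` contraction-valued. -/
def Kset (n t : ℕ) : Set ((Fin t → Fin n) → ℝ) :=
  {R | ∃ (d : ℕ) (u v : EuclideanSpace ℝ (Fin d)) (A : Fin n → Mat d),
    ‖u‖ = 1 ∧ ‖v‖ = 1 ∧ (∀ j, ‖A j‖ ≤ 1) ∧
    ∀ i : Fin t → Fin n, R i = (inner ℝ u ((List.ofFn fun s => A (i s)).prod v) : ℝ)}

/-- The completely bounded norm of a `t`-tensor (scalar form):
`‖T‖_cb = sup { |∑_i T_i ⟨u, A(i₁)⋯A(i_t) v⟩| : u, v unit vectors, A contraction-valued }`. -/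
def cbNorm (n t : ℕ) (T : (Fin t → Fin n) → ℝ) : ℝ :=
  sSup {c : ℝ | ∃ (d : ℕ) (u v : EuclideanSpace ℝ (Fin d)) (A : Fin n → Mat d),
    ‖u‖ = 1 ∧ ‖v‖ = 1 ∧ (∀ j, ‖A j‖ ≤ 1) ∧
    c = |∑ i : Fin t → Fin n,
          T i * (inner ℝ u ((List.ofFn fun s => A (i s)).prod v) : ℝ)|}

/-!
Since `cbNorm T = sup_{Q ∈ K} |⟪T, Q⟫|` and `K = K(n,t)` is symmetric, the dual unit ball
`{T | cbNorm T ≤ 1}` is the polar of `K`, and the theorem is the bipolar identity: the gauge of a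
convex absorbent set is the support function of its polar. One inequality is immediate from
`R = w • Q`; for the other, Hahn–Banach extends `c • R ↦ c * gauge K R` to a linear functional
dominated by the gauge, hence bounded by `1` on `K`.

That `K` is a convex neighbourhood of `0` is the geometric input: realizations can be negated
(`u ↦ -u`) and added as direct sums (with `u, v` scaled by `√a, √b`), and each standard basis
tensor is realized by weighted shifts on `ℝ^{t+1}`, so `K` contains a small sup-norm ball.
-/

open scoped InnerProductSpace Matrix Topology

section Gauge

variable {E : Type*} [AddCommGroup E] [Module ℝ E] {s : Set E}

theorem le_gauge_of_forall_le_one (φ : Module.Dual ℝ E) (hs : Absorbent ℝ s)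
    (hφ : ∀ y ∈ s, φ y ≤ 1) (x : E) : φ x ≤ gauge s x := by
  refine le_csInf hs.gauge_set_nonempty ?_
  rintro r ⟨hr, y, hy, rfl⟩
  rw [map_smul, smul_eq_mul]
  exact mul_le_of_le_one_right hr.le (hφ y hy)

theorem exists_dual_le_gauge_eq (hc : Convex ℝ s) (hs : Absorbent ℝ s) (x : E) :
    ∃ φ : Module.Dual ℝ E, (∀ y, φ y ≤ gauge s y) ∧ φ x = gauge s x := by
  rcases eq_or_ne x 0 with rfl | hx
  · exact ⟨0, fun y => gauge_nonneg y, by simp⟩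
  set f : E →ₗ.[ℝ] ℝ := LinearPMap.mkSpanSingleton x (gauge s x) hx
  have hf : ∀ y : f.domain, f y ≤ gauge s y := by
    rintro ⟨y, hy⟩
    obtain ⟨c, rfl⟩ := Submodule.mem_span_singleton.1 hy
    rw [LinearPMap.mkSpanSingleton'_apply, smul_eq_mul]
    rcases le_or_gt c 0 with hc0 | hc0
    · exact (mul_nonpos_of_nonpos_of_nonneg hc0 (gauge_nonneg x)).trans (gauge_nonneg _)
    · rw [gauge_smul_of_nonneg hc0.le, smul_eq_mul, RingHom.id_apply]
  obtain ⟨φ, hφf, hφ⟩ := exists_extension_of_le_sublinear f (gauge s)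
    (fun c hc y => gauge_smul_of_nonneg hc.le y) (gauge_add_le hc hs) hf
  exact ⟨φ, hφ, (hφf ⟨x, Submodule.mem_span_singleton_self x⟩).trans
    (LinearPMap.mkSpanSingleton'_apply_self _ _ _ _)⟩

end Gauge

theorem isGreatest_dotProduct_gauge {ι : Type*} [Fintype ι] {s : Set (ι → ℝ)}
    (hc : Convex ℝ s) (hs : Absorbent ℝ s) (x : ι → ℝ) :
    IsGreatest {c | ∃ T : ι → ℝ, (∀ Q ∈ s, T ⬝ᵥ Q ≤ 1) ∧ c = x ⬝ᵥ T} (gauge s x) := by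
  classical
  refine ⟨?_, ?_⟩
  · obtain ⟨φ, hφ, hφx⟩ := exists_dual_le_gauge_eq hc hs x
    set T := (dotProductEquiv ℝ ι).symm φ
    have hT : ∀ y, T ⬝ᵥ y = φ y := fun y => by
      rw [← dotProductEquiv_apply_apply, LinearEquiv.apply_symm_apply]
    refine ⟨T, fun Q hQ => ?_, ?_⟩
    · rw [hT]
      exact (hφ Q).trans (gauge_le_one_of_mem hQ)
    · rw [dotProduct_comm, hT, hφx]
  · rintro c ⟨T, hT, rfl⟩
    rw [dotProduct_comm]
    exact le_gauge_of_forall_le_one (dotProductEquiv ℝ ι T) hs hT x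

section Contraction

variable {E F : Type*} [SeminormedAddCommGroup E] [NormedSpace ℝ E] [SeminormedAddCommGroup F]
  [NormedSpace ℝ F]

theorem ContinuousLinearMap.opNorm_le_one_of_norm_sq_le (A : E →L[ℝ] E)
    (h : ∀ x, ‖A x‖ ^ 2 ≤ ‖x‖ ^ 2) : ‖A‖ ≤ 1 :=
  A.opNorm_le_bound zero_le_one fun x => by
    rw [one_mul]
    exact (pow_le_pow_iff_left₀ (norm_nonneg _) (norm_nonneg _) two_ne_zero).1 (h x)

theorem norm_list_prod_apply_le (L : List (E →L[ℝ] E)) (hL : ∀ B ∈ L, ‖B‖ ≤ 1) (x : E) :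
    ‖L.prod x‖ ≤ ‖x‖ := by
  induction L with
  | nil => simp
  | cons B L ih =>
    rw [List.prod_cons, mul_apply_eq_comp]
    calc ‖B (L.prod x)‖ ≤ 1 * ‖L.prod x‖ := B.le_of_opNorm_le (hL B List.mem_cons_self) _
      _ ≤ ‖x‖ := by
        rw [one_mul]
        exact ih fun B' hB' => hL B' (List.mem_cons_of_mem _ hB')

theorem norm_conjContinuousAlgEquiv_le_one (e : E ≃ₗᵢ[ℝ] F) {A : E →L[ℝ] E}
    (hA : ‖A‖ ≤ 1) :
    ‖e.toContinuousLinearEquiv.conjContinuousAlgEquiv A‖ ≤ 1 :=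
  ContinuousLinearMap.opNorm_le_bound _ zero_le_one fun y => by
    simpa using A.le_of_opNorm_le hA (e.symm y)

end Contraction

section Block

variable {E F : Type*} [SeminormedAddCommGroup E] [NormedSpace ℝ E] [SeminormedAddCommGroup F]
  [NormedSpace ℝ F]

def blockDiag (A : E →L[ℝ] E) (B : F →L[ℝ] F) : WithLp 2 (E × F) →L[ℝ] WithLp 2 (E × F) :=
  (WithLp.prodContinuousLinearEquiv 2 ℝ E F).symm.conjContinuousAlgEquiv (A.prodMap B)

theorem blockDiag_apply (A : E →L[ℝ] E) (B : F →L[ℝ] F) (x : WithLp 2 (E × F)) :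
    blockDiag A B x = WithLp.toLp 2 (A x.fst, B x.snd) :=
  rfl

theorem norm_blockDiag_le_one {A : E →L[ℝ] E} {B : F →L[ℝ] F} (hA : ‖A‖ ≤ 1)
    (hB : ‖B‖ ≤ 1) :
    ‖blockDiag A B‖ ≤ 1 := by
  refine (blockDiag A B).opNorm_le_one_of_norm_sq_le fun x => ?_
  rw [WithLp.prod_norm_sq_eq_of_L2, WithLp.prod_norm_sq_eq_of_L2 x, blockDiag_apply]
  gcongr
  · simpa using A.le_of_opNorm_le hA x.fst
  · simpa using B.le_of_opNorm_le hB x.snd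

theorem list_prod_map_blockDiag_apply {ι : Type*} (l : List ι) (A : ι → E →L[ℝ] E)
    (B : ι → F →L[ℝ] F) (x : E) (y : F) :
    (l.map fun j => blockDiag (A j) (B j)).prod (WithLp.toLp 2 (x, y)) =
      WithLp.toLp 2 ((l.map A).prod x, (l.map B).prod y) := by
  induction l with
  | nil => rfl
  | cons j l ih => simp only [List.map_cons, List.prod_cons, mul_apply_eq_comp, ih]; rfl

theorem norm_toLp_sqrt_smul {a b : ℝ} (ha : 0 ≤ a) (hb : 0 ≤ b) (hab : a + b = 1)
    {x : E} {y : F} (hx : ‖x‖ = 1) (hy : ‖y‖ = 1) : ‖WithLp.toLp 2 (√a • x, √b • y)‖ = 1 := by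
  rw [← pow_eq_one_iff_of_nonneg (norm_nonneg _) two_ne_zero, WithLp.prod_norm_sq_eq_of_L2]
  simp [norm_smul, hx, hy, Real.sq_sqrt ha, Real.sq_sqrt hb, hab]

end Block

section WordTensor

variable {n t : ℕ} {E F : Type*} [NormedAddCommGroup E] [InnerProductSpace ℝ E]
  [NormedAddCommGroup F] [InnerProductSpace ℝ F]

def wordTensor (t : ℕ) (u : E) (A : Fin n → E →L[ℝ] E) (v : E) : (Fin t → Fin n) → ℝ :=
  fun i => ⟪u, ((List.ofFn i).map A).prod v⟫_ℝ

theorem mem_Kset_iff {R : (Fin t → Fin n) → ℝ} :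
    R ∈ Kset n t ↔ ∃ (d : ℕ) (u v : EuclideanSpace ℝ (Fin d)) (A : Fin n → Mat d),
      ‖u‖ = 1 ∧ ‖v‖ = 1 ∧ (∀ j, ‖A j‖ ≤ 1) ∧ R = wordTensor t u A v := by
  simp only [Kset, wordTensor, List.map_ofFn, funext_iff, Set.mem_ofPred_eq]
  rfl

theorem abs_wordTensor_le_one {u v : E} {A : Fin n → E →L[ℝ] E} (hu : ‖u‖ = 1)
    (hv : ‖v‖ = 1) (hA : ∀ j, ‖A j‖ ≤ 1) (i : Fin t → Fin n) : |wordTensor t u A v i| ≤ 1 := by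
  have hP : ‖((List.ofFn i).map A).prod v‖ ≤ 1 :=
    hv ▸ norm_list_prod_apply_le _ (by simpa using fun s => hA (i s)) v
  calc |wordTensor t u A v i| ≤ ‖u‖ * ‖((List.ofFn i).map A).prod v‖ :=
        abs_real_inner_le_norm _ _
    _ ≤ 1 := by rw [hu, one_mul]; exact hP

theorem wordTensor_neg_left (u : E) (A : Fin n → E →L[ℝ] E) (v : E) :
    wordTensor t (-u) A v = -wordTensor t u A v := by
  ext i
  simp [wordTensor, inner_neg_left]

theorem wordTensor_smul_smul (a b : ℝ) (u : E) (A : Fin n → E →L[ℝ] E) (v : E) :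
    wordTensor t (a • u) A (b • v) = (a * b) • wordTensor t u A v := by
  ext i
  simp [wordTensor, real_inner_smul_left, real_inner_smul_right]
  ring

theorem wordTensor_conj (e : E ≃ₗᵢ[ℝ] F) (u : E) (A : Fin n → E →L[ℝ] E) (v : E) :
    wordTensor t (e u) (fun j => e.toContinuousLinearEquiv.conjContinuousAlgEquiv (A j)) (e v) =
      wordTensor t u A v := by
  ext i
  set conj := e.toContinuousLinearEquiv.conjContinuousAlgEquiv
  have hprod : ((List.ofFn i).map fun j => conj (A j)).prod = conj ((List.ofFn i).map A).prod := by
    rw [map_list_prod, List.map_map]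
    rfl
  simp only [wordTensor, hprod, conj, ContinuousLinearEquiv.conjContinuousAlgEquiv_apply_apply]
  simp

theorem wordTensor_mem_Kset [FiniteDimensional ℝ E] {u v : E} {A : Fin n → E →L[ℝ] E}
    (hu : ‖u‖ = 1) (hv : ‖v‖ = 1) (hA : ∀ j, ‖A j‖ ≤ 1) : wordTensor t u A v ∈ Kset n t := by
  set e := (stdOrthonormalBasis ℝ E).repr
  rw [mem_Kset_iff, ← wordTensor_conj e]
  exact ⟨_, e u, e v, _, by simpa using hu, by simpa using hv,
    fun j => norm_conjContinuousAlgEquiv_le_one e (hA j), rfl⟩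

theorem wordTensor_blockDiag (u₁ v₁ : E) (u₂ v₂ : F) (A : Fin n → E →L[ℝ] E)
    (B : Fin n → F →L[ℝ] F) :
    wordTensor t (WithLp.toLp 2 (u₁, u₂)) (fun j => blockDiag (A j) (B j))
        (WithLp.toLp 2 (v₁, v₂)) = wordTensor t u₁ A v₁ + wordTensor t u₂ B v₂ := by
  ext i
  simp only [wordTensor, list_prod_map_blockDiag_apply, WithLp.prod_inner_apply, Pi.add_apply]

end WordTensor

section Shift

variable {n t : ℕ}

/-- `e (s + 1) ↦ e s`, but only at the positions `s` where `i₀ s = j`: the word `i₀` is then the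
only one whose product carries the last basis vector to the first. -/
def shiftOp (i₀ : Fin t → Fin n) (j : Fin n) :
    EuclideanSpace ℝ (Fin (t + 1)) →L[ℝ] EuclideanSpace ℝ (Fin (t + 1)) :=
  LinearMap.toContinuousLinearMap
    { toFun x := WithLp.toLp 2 (Fin.snoc (fun s => if i₀ s = j then x s.succ else 0) 0)
      map_add' := fun x y => by
        ext r
        refine Fin.lastCases ?_ (fun s => ?_) r
        · simp
        · by_cases h : i₀ s = j <;> simp [h]
      map_smul' := fun c x => by
        ext r
        refine Fin.lastCases ?_ (fun s => ?_) r
        · simp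
        · by_cases h : i₀ s = j <;> simp [h] }

variable (i₀ : Fin t → Fin n) (j : Fin n)

@[simp]
theorem shiftOp_apply_castSucc (x : EuclideanSpace ℝ (Fin (t + 1))) (s : Fin t) :
    shiftOp i₀ j x s.castSucc = if i₀ s = j then x s.succ else 0 := by
  simp [shiftOp]

@[simp]
theorem shiftOp_apply_last (x : EuclideanSpace ℝ (Fin (t + 1))) :
    shiftOp i₀ j x (Fin.last t) = 0 := by
  simp [shiftOp]

theorem norm_shiftOp_le_one : ‖shiftOp i₀ j‖ ≤ 1 := by
  refine (shiftOp i₀ j).opNorm_le_one_of_norm_sq_le fun x => ?_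
  rw [EuclideanSpace.norm_sq_eq, EuclideanSpace.norm_sq_eq, Fin.sum_univ_castSucc,
    Fin.sum_univ_succ]
  simp only [shiftOp_apply_castSucc, shiftOp_apply_last, norm_zero]
  have hterm : ∀ s, ‖if i₀ s = j then x s.succ else 0‖ ^ 2 ≤ ‖x s.succ‖ ^ 2 := fun s => by
    split_ifs <;> simp [sq_nonneg]
  linarith [Finset.sum_le_sum fun s (_ : s ∈ Finset.univ) => hterm s, sq_nonneg ‖x 0‖]

theorem shiftOp_single_succ (s : Fin t) :
    shiftOp i₀ j (EuclideanSpace.single s.succ 1) =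
      if i₀ s = j then EuclideanSpace.single s.castSucc 1 else 0 := by
  ext r
  refine Fin.lastCases ?_ (fun r => ?_) r
  · split_ifs <;> simp
  · by_cases hr : r = s <;> by_cases h : i₀ s = j <;> simp [hr, h]

theorem list_prod_shiftOp_drop (i : Fin t → Fin n) {k : ℕ} (hk : k ≤ t) :
    (((List.ofFn i).drop k).map (shiftOp i₀)).prod (EuclideanSpace.single (Fin.last t) 1) =
      if (List.ofFn i).drop k = (List.ofFn i₀).drop k then
        EuclideanSpace.single ⟨k, Nat.lt_succ_of_le hk⟩ 1 else 0 := by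
  induction hk using Nat.decreasingInduction with
  | self => simp [List.drop_eq_nil_of_le]; rfl
  | of_succ k hk ih =>
    have hlen : ∀ w : Fin t → Fin n, k < (List.ofFn w).length := fun w => by simpa using hk
    rw [List.drop_eq_getElem_cons (hlen i), List.drop_eq_getElem_cons (hlen i₀), List.map_cons,
      List.prod_cons, mul_apply_eq_comp, ih, List.getElem_ofFn, List.getElem_ofFn]
    have hstep := shiftOp_single_succ i₀ (i ⟨k, hk⟩) ⟨k, hk⟩
    simp only [Fin.succ_mk, Fin.castSucc_mk] at hstep
    split_ifs <;> simp_all [eq_comm]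

theorem wordTensor_shiftOp :
    wordTensor t (EuclideanSpace.single 0 1) (shiftOp i₀)
      (EuclideanSpace.single (Fin.last t) 1) = Pi.single i₀ 1 := by
  ext i
  have hprod := list_prod_shiftOp_drop i₀ i (Nat.zero_le t)
  simp only [List.drop_zero, List.ofFn_inj] at hprod
  simp only [wordTensor, hprod]
  by_cases h : i = i₀ <;> simp [h]

end Shift

section Kset

variable {n t : ℕ}

theorem convex_Kset : Convex ℝ (Kset n t) := by
  intro Q₁ hQ₁ Q₂ hQ₂ a b ha hb hab
  obtain ⟨d₁, u₁, v₁, A₁, hu₁, hv₁, hA₁, rfl⟩ := mem_Kset_iff.1 hQ₁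
  obtain ⟨d₂, u₂, v₂, A₂, hu₂, hv₂, hA₂, rfl⟩ := mem_Kset_iff.1 hQ₂
  have hsum := wordTensor_blockDiag (t := t) (√a • u₁) (√a • v₁) (√b • u₂) (√b • v₂) A₁ A₂
  rw [wordTensor_smul_smul, wordTensor_smul_smul, Real.mul_self_sqrt ha,
    Real.mul_self_sqrt hb] at hsum
  rw [← hsum]
  exact wordTensor_mem_Kset (norm_toLp_sqrt_smul ha hb hab hu₁ hu₂)
    (norm_toLp_sqrt_smul ha hb hab hv₁ hv₂) fun j => norm_blockDiag_le_one (hA₁ j) (hA₂ j)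

theorem single_mem_Kset (i₀ : Fin t → Fin n) : Pi.single i₀ 1 ∈ Kset n t :=
  wordTensor_shiftOp i₀ ▸ wordTensor_mem_Kset (by simp) (by simp) (norm_shiftOp_le_one i₀)

theorem neg_mem_Kset {Q : (Fin t → Fin n) → ℝ} (hQ : Q ∈ Kset n t) : -Q ∈ Kset n t := by
  obtain ⟨d, u, v, A, hu, hv, hA, rfl⟩ := mem_Kset_iff.1 hQ
  exact wordTensor_neg_left u A v ▸
    mem_Kset_iff.2 ⟨d, -u, v, A, by rwa [norm_neg], hv, hA, rfl⟩

theorem balanced_Kset : Balanced ℝ (Kset n t) :=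
  (balanced_iff_neg_mem convex_Kset).2 fun _ => neg_mem_Kset

theorem zero_mem_Kset : (0 : (Fin t → Fin n) → ℝ) ∈ Kset n t := by
  have hQ := wordTensor_mem_Kset (t := t) (u := EuclideanSpace.single (0 : Fin 1) (1 : ℝ))
    (v := EuclideanSpace.single 0 1) (A := fun _ : Fin n => 0) (by simp) (by simp) (by simp)
  simpa using balanced_Kset.smul_mem (a := (0 : ℝ)) (by simp) hQ

theorem closedBall_subset_Kset [Nonempty (Fin t → Fin n)] :
    Metric.closedBall 0 (Fintype.card (Fin t → Fin n) : ℝ)⁻¹ ⊆ Kset n t := by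
  intro z hz
  set N : ℝ := (Fintype.card (Fin t → Fin n) : ℝ)
  have hN : 0 < N := Nat.cast_pos.2 Fintype.card_pos
  have hz_eq : z = ∑ i, N⁻¹ • ((N * z i) • Pi.single i (1 : ℝ)) := by
    ext j
    simp [Finset.sum_apply, Pi.single_apply]
    field_simp
  rw [hz_eq]
  refine convex_Kset.sum_mem (fun _ _ => by positivity)
    (by rw [Finset.sum_const, Finset.card_univ, nsmul_eq_mul]; exact mul_inv_cancel₀ hN.ne')
    fun i _ => balanced_Kset.smul_mem ?_ (single_mem_Kset i)
  rw [Real.norm_eq_abs, abs_mul, abs_of_pos hN]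
  calc N * |z i| ≤ N * N⁻¹ := by
        gcongr
        simpa using (norm_le_pi_norm z i).trans (mem_closedBall_zero_iff.1 hz)
    _ = 1 := mul_inv_cancel₀ hN.ne'

theorem Kset_mem_nhds_zero : Kset n t ∈ 𝓝 (0 : (Fin t → Fin n) → ℝ) := by
  rcases isEmpty_or_nonempty (Fin t → Fin n) with h | h
  · exact Filter.mem_of_superset Filter.univ_mem fun z _ =>
      Subsingleton.elim 0 z ▸ zero_mem_Kset
  · exact Filter.mem_of_superset (Metric.closedBall_mem_nhds 0 (by positivity))
      closedBall_subset_Kset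

theorem abs_dotProduct_le_of_mem_Kset (T : (Fin t → Fin n) → ℝ) {Q : (Fin t → Fin n) → ℝ}
    (hQ : Q ∈ Kset n t) : |T ⬝ᵥ Q| ≤ ∑ i, |T i| := by
  obtain ⟨d, u, v, A, hu, hv, hA, rfl⟩ := mem_Kset_iff.1 hQ
  refine (Finset.abs_sum_le_sum_abs _ _).trans (Finset.sum_le_sum fun i _ => ?_)
  rw [abs_mul]
  exact mul_le_of_le_one_right (abs_nonneg _) (abs_wordTensor_le_one hu hv hA i)

theorem cbNorm_eq_sSup (T : (Fin t → Fin n) → ℝ) :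
    cbNorm n t T = sSup ((fun Q => |T ⬝ᵥ Q|) '' Kset n t) := by
  unfold cbNorm
  congr 1
  ext c
  constructor
  · rintro ⟨d, u, v, A, hu, hv, hA, rfl⟩
    exact ⟨_, ⟨d, u, v, A, hu, hv, hA, fun i => rfl⟩, rfl⟩
  · rintro ⟨Q, ⟨d, u, v, A, hu, hv, hA, hQ⟩, rfl⟩
    exact ⟨d, u, v, A, hu, hv, hA, by simp only [dotProduct, hQ]⟩

theorem cbNorm_le_one_iff (T : (Fin t → Fin n) → ℝ) :
    cbNorm n t T ≤ 1 ↔ ∀ Q ∈ Kset n t, T ⬝ᵥ Q ≤ 1 := by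
  rw [cbNorm_eq_sSup, csSup_le_iff
    ⟨_, Set.forall_mem_image.2 fun Q hQ => abs_dotProduct_le_of_mem_Kset T hQ⟩
    (Set.image_nonempty.2 ⟨0, zero_mem_Kset⟩), Set.forall_mem_image]
  refine ⟨fun h Q hQ => (le_abs_self _).trans (h hQ), fun h Q hQ => abs_le.2 ⟨?_, h Q hQ⟩⟩
  have hneg := h (-Q) (neg_mem_Kset hQ)
  rw [dotProduct_neg] at hneg
  linarith

end Kset

theorem cb_dual_eq_gauge_Kset (n t : ℕ) (R : (Fin t → Fin n) → ℝ) :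
    sSup {c : ℝ | ∃ T : (Fin t → Fin n) → ℝ, cbNorm n t T ≤ 1 ∧
        c = ∑ i : Fin t → Fin n, R i * T i} =
    sInf {w : ℝ | 0 < w ∧ ∃ Q ∈ Kset n t, R = w • Q} := by
  have hgauge : sInf {w : ℝ | 0 < w ∧ ∃ Q ∈ Kset n t, R = w • Q} = gauge (Kset n t) R := by
    simp only [gauge, Set.mem_smul_set, eq_comm]
  simp_rw [hgauge, cbNorm_le_one_iff]
  exact (isGreatest_dotProduct_gauge convex_Kset
    (absorbent_nhds_zero Kset_mem_nhds_zero) R).csSup_eq
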